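/- For each n ≥ 2 let c_n, d_n > 0 be bounded sequences with p_n = c_n/n ∈ (0,1) and q_n = d_n/n ∈ (0,1), let the prior on Θ_n be uniform, let θ_n ∈ Θ_n, let a_n ∈ (0, 1/2), and let k_n be an integer with k_n ≥ a_n·n. If a_n·n·(log(a_n) + (1/4)(√c_n − √d_n)² − 1) → ∞ as n → ∞, then P_{θ_n} Π(B_n(θ_n, k_n) | X^n) → 1, i.e. the posterior recovers the community assignment almost-exactly with error rate k_n. -/

import Mathlib

open Finset Real Filter

/-- The set of potential edges of an `n`-vertex graph: pairs `(i,j)` with `i < j`. -/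
abbrev Edge (n : ℕ) := {e : Fin n × Fin n // e.1 < e.2}

/-- An observed graph: an edge indicator for each potential edge. -/
abbrev ObsGraph (n : ℕ) := Edge n → Bool

/-- Edge probability under assignment `θ`: `p` within communities, `q` between. -/
noncomputable def edgeProb {n : ℕ} (p q : ℝ) (θ : Fin n → Bool) (e : Edge n) : ℝ :=
  if θ e.val.1 = θ e.val.2 then p else q

/-- Probability mass function of the observed graph under `θ`. -/
noncomputable def graphPMF {n : ℕ} (p q : ℝ) (θ : Fin n → Bool) (x : ObsGraph n) : ℝ :=
  ∏ e : Edge n, if x e then edgeProb p q θ e else 1 - edgeProb p q θ e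

/-- Hellinger affinity of Bernoulli parameters. -/
noncomputable def rho (p q : ℝ) : ℝ := Real.sqrt (p * q) + Real.sqrt ((1 - p) * (1 - q))

/-- Edges whose probability changes from `p` to `q` when replacing `θ` by `η`. -/
def D1 {n : ℕ} (θ η : Fin n → Bool) : Finset (Fin n × Fin n) :=
  Finset.univ.filter fun e => e.1 < e.2 ∧ θ e.1 = θ e.2 ∧ η e.1 ≠ η e.2

/-- Edges whose probability changes from `q` to `p` when replacing `θ` by `η`. -/
def D2 {n : ℕ} (θ η : Fin n → Bool) : Finset (Fin n × Fin n) :=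
  Finset.univ.filter fun e => e.1 < e.2 ∧ θ e.1 ≠ θ e.2 ∧ η e.1 = η e.2

/-- Hamming distance. -/
def hdist {n : ℕ} (θ η : Fin n → Bool) : ℕ := (Finset.univ.filter fun i => θ i ≠ η i).card

/-- The metric `k(θ,η) = h(θ,η) ∧ (n - h(θ,η))`. -/
def kdist {n : ℕ} (θ η : Fin n → Bool) : ℕ := min (hdist θ η) (n - hdist θ η)

/-- Size of the smallest community. -/
def countOnes {n : ℕ} (θ : Fin n → Bool) : ℕ := (Finset.univ.filter fun i => θ i = true).card

/-- The parameter space `Θ_n`. -/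
def Theta (n : ℕ) : Finset (Fin n → Bool) :=
  Finset.univ.filter fun θ => 2 * countOnes θ ≤ n ∧
    ∀ i : Fin n, 2 * countOnes θ = n → (i : ℕ) = 0 → θ i = false

/-- Posterior mass of `A ⊆ Θ_n` given data `x`, under prior mass function `π`. -/
noncomputable def postMass {n : ℕ} (p q : ℝ) (pri : (Fin n → Bool) → ℝ)
    (A : Finset (Fin n → Bool)) (x : ObsGraph n) : ℝ :=
  (∑ η ∈ A, pri η * graphPMF p q η x) / (∑ η ∈ Theta n, pri η * graphPMF p q η x)

/-- `P_θ`-expectation of the posterior mass of `A`. -/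
noncomputable def expPostMass {n : ℕ} (p q : ℝ) (pri : (Fin n → Bool) → ℝ)
    (θ : Fin n → Bool) (A : Finset (Fin n → Bool)) : ℝ :=
  ∑ x : ObsGraph n, graphPMF p q θ x * postMass p q pri A x

/-- The uniform prior on `Θ_n`. -/
noncomputable def unifPrior (n : ℕ) : (Fin n → Bool) → ℝ := fun _ => ((2:ℝ) ^ (n - 1))⁻¹

/-- Hamming ball `B_n(θ,k)` inside `Θ_n`. -/
def hball {n : ℕ} (θ : Fin n → Bool) (k : ℕ) : Finset (Fin n → Bool) :=
  (Theta n).filter fun η => kdist η θ ≤ k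

/-!
Under a uniform prior the posterior weight of `η` is `p_η / Σ_ζ p_ζ`, and
`p_θ p_η / Σ_ζ p_ζ ≤ min (p_θ, p_η) ≤ √(p_θ p_η)`, so the expected posterior mass outside the
ball is at most the sum of the Bhattacharyya coefficients `Σ_x √(p_θ(x) p_η(x))` over the `η`
outside it. The graph is a product of Bernoulli edges, and exactly `h (n - h)` of them
(`h = h(θ, η)`) change law between `θ` and `η`, so the coefficient is `ρ(p, q) ^ (h (n - h))`.

Group the `η` by `m = k(η, θ) > k_n`: there are at most `2 (n choose m) ≤ 2 (e n / m) ^ m` of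
them, and since `ρ(p, q) ≤ exp (-(√p - √q)² / 2)` and `n - m ≥ n / 2` each contributes at most
`exp (-m (√c_n - √d_n)² / 4)`. Bounding `m log m` from below by its tangent at `a_n n` turns the
contribution of the shell `m` into `2 exp (-T_n - (m - k_n))`, where `T_n` is the quantity
assumed to diverge. Summing the geometric series, the expected posterior mass outside the ball
is at most `2 exp (-T_n) → 0`.
-/

lemma rho_comm (p q : ℝ) : rho p q = rho q p := by
  simp only [rho, mul_comm]

lemma rho_self {r : ℝ} (h0 : 0 ≤ r) (h1 : r ≤ 1) : rho r r = 1 := by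
  rw [rho, sqrt_mul_self h0, sqrt_mul_self (by linarith)]
  ring

lemma rho_le_exp_neg {p q : ℝ} (hp0 : 0 ≤ p) (hp1 : p ≤ 1) (hq0 : 0 ≤ q) (hq1 : q ≤ 1) :
    rho p q ≤ exp (-((√p - √q) ^ 2 / 2)) := by
  have hp := sq_sqrt hp0
  have hq := sq_sqrt hq0
  have hp' := sq_sqrt (sub_nonneg.2 hp1)
  have hq' := sq_sqrt (sub_nonneg.2 hq1)
  have amgm : √(1 - p) * √(1 - q) ≤ (1 - p + (1 - q)) / 2 := by
    nlinarith [sq_nonneg (√(1 - p) - √(1 - q))]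
  calc rho p q = √p * √q + √(1 - p) * √(1 - q) := by
        rw [rho, sqrt_mul hp0, sqrt_mul (sub_nonneg.2 hp1)]
    _ ≤ -((√p - √q) ^ 2 / 2) + 1 := by nlinarith
    _ ≤ exp (-((√p - √q) ^ 2 / 2)) := add_one_le_exp _

section Hamming

variable {n : ℕ}

lemma hdist_comm (θ η : Fin n → Bool) : hdist θ η = hdist η θ := by
  simp only [hdist, ne_comm]

lemma hdist_le (θ η : Fin n → Bool) : hdist θ η ≤ n :=
  (card_filter_le _ _).trans_eq (card_fin n)

lemma kdist_le (θ η : Fin n → Bool) : kdist θ η ≤ n :=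
  (min_le_left _ _).trans (hdist_le θ η)

lemma two_mul_kdist_le (θ η : Fin n → Bool) : 2 * kdist θ η ≤ n := by
  have := hdist_le θ η
  unfold kdist
  omega

lemma kdist_mul_sub_kdist (θ η : Fin n → Bool) :
    kdist θ η * (n - kdist θ η) = hdist θ η * (n - hdist θ η) := by
  have := hdist_le θ η
  rcases min_choice (hdist θ η) (n - hdist θ η) with h | h <;> rw [kdist, h]
  rw [Nat.sub_sub_self this, mul_comm]

lemma card_hdist_eq_le_choose (θ : Fin n → Bool) (h : ℕ) :
    #(univ.filter fun η : Fin n → Bool => hdist η θ = h) ≤ n.choose h := by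
  refine (card_le_card_of_injOn (t := univ.powersetCard h)
    (fun η => univ.filter fun i => η i ≠ θ i) ?_ ?_).trans_eq (by simp)
  · intro η hη
    simp_all [mem_powersetCard, hdist]
  · intro η _ η' _ hηη'
    funext i
    have := congrArg (i ∈ ·) hηη'
    simp only [mem_filter, mem_univ, true_and, eq_iff_iff] at this
    revert this
    cases η i <;> cases η' i <;> cases θ i <;> decide

lemma card_kdist_eq_le_two_mul_choose (θ : Fin n → Bool) (m : ℕ) :
    #(univ.filter fun η : Fin n → Bool => kdist η θ = m) ≤ 2 * n.choose m := by
  by_cases hmn : m ≤ n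
  · calc #(univ.filter fun η : Fin n → Bool => kdist η θ = m)
        ≤ #((univ.filter fun η : Fin n → Bool => hdist η θ = m)
            ∪ univ.filter fun η : Fin n → Bool => hdist η θ = n - m) := by
          refine card_le_card fun η hη => ?_
          have := hdist_le η θ
          have hk := (mem_filter.1 hη).2
          simp only [mem_filter, mem_univ, true_and, mem_union]
          unfold kdist at hk
          omega
      _ ≤ n.choose m + n.choose (n - m) :=
          (card_union_le _ _).trans (add_le_add (card_hdist_eq_le_choose θ m)
            (card_hdist_eq_le_choose θ (n - m)))
      _ = 2 * n.choose m := by rw [Nat.choose_symm hmn, two_mul]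
  · have hempty : (univ.filter fun η : Fin n → Bool => kdist η θ = m) = ∅ :=
      filter_false_of_mem fun η _ => by have := kdist_le η θ; omega
    simp [hempty]

lemma card_filter_edge_mem_iff_notMem (S : Finset (Fin n)) :
    #(univ.filter fun e : Edge n => (e.1.1 ∈ S ↔ e.1.2 ∉ S)) = #S * #Sᶜ := by
  rw [← card_product]
  refine card_nbij (fun e => if e.1.1 ∈ S then e.1 else e.1.swap) ?_ ?_ ?_
  · intro e he
    simp only [coe_filter, mem_univ, true_and, Set.mem_ofPred_eq] at he
    by_cases h : e.1.1 ∈ S <;> simp [h] at he ⊢ <;> tauto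
  · rintro ⟨⟨i, j⟩, hij⟩ - ⟨⟨i', j'⟩, hij'⟩ - h
    simp only at h hij hij'
    split_ifs at h <;> simp_all [Prod.ext_iff] <;> omega
  · rintro ⟨i, j⟩ hij
    simp only [coe_product, Set.mem_prod, mem_coe, mem_compl] at hij
    have hne : i ≠ j := by rintro rfl; exact hij.2 hij.1
    rcases hne.lt_or_gt with h | h
    · exact ⟨⟨(i, j), h⟩, by simp [hij.1, hij.2], by simp [hij.1]⟩
    · exact ⟨⟨(j, i), h⟩, by simp [hij.1, hij.2], by simp [hij.2]⟩

end Hamming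

section GraphModel

variable {n : ℕ} {p q : ℝ}

lemma edgeProb_mem {s : Set ℝ} (hp : p ∈ s) (hq : q ∈ s) (θ : Fin n → Bool) (e : Edge n) :
    edgeProb p q θ e ∈ s := by
  unfold edgeProb
  split <;> assumption

lemma graphPMF_pos (hp : p ∈ Set.Ioo (0 : ℝ) 1) (hq : q ∈ Set.Ioo (0 : ℝ) 1)
    (θ : Fin n → Bool) (x : ObsGraph n) : 0 < graphPMF p q θ x := by
  refine prod_pos fun e _ => ?_
  have := edgeProb_mem hp hq θ e
  split <;> linarith [this.1, this.2]

lemma sum_prod_obsGraph (f : Edge n → Bool → ℝ) :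
    ∑ x : ObsGraph n, ∏ e, f e (x e) = ∏ e, (f e true + f e false) := by
  simp only [← Fintype.sum_bool, Fintype.prod_sum]

lemma sum_graphPMF (p q : ℝ) (θ : Fin n → Bool) : ∑ x : ObsGraph n, graphPMF p q θ x = 1 := by
  unfold graphPMF
  rw [sum_prod_obsGraph fun e b => if b then edgeProb p q θ e else 1 - edgeProb p q θ e]
  simp

lemma sum_sqrt_graphPMF_mul (hp : p ∈ Set.Icc (0 : ℝ) 1) (hq : q ∈ Set.Icc (0 : ℝ) 1)
    (θ η : Fin n → Bool) :
    ∑ x : ObsGraph n, √(graphPMF p q θ x * graphPMF p q η x)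
      = ∏ e, rho (edgeProb p q θ e) (edgeProb p q η e) := by
  set g : Edge n → Bool → ℝ := fun e b =>
    √((if b then edgeProb p q θ e else 1 - edgeProb p q θ e) *
      (if b then edgeProb p q η e else 1 - edgeProb p q η e)) with hg
  have hfac : ∀ x : ObsGraph n, √(graphPMF p q θ x * graphPMF p q η x) = ∏ e, g e (x e) := by
    intro x
    rw [graphPMF, graphPMF, ← prod_mul_distrib, sqrt_prod]
    intro e _
    obtain ⟨hθ0, hθ1⟩ := edgeProb_mem hp hq θ e
    obtain ⟨hη0, hη1⟩ := edgeProb_mem hp hq η e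
    split
    · positivity
    · exact mul_nonneg (by linarith) (by linarith)
  rw [Fintype.sum_congr _ _ hfac, sum_prod_obsGraph]
  simp [hg, rho]

lemma rho_edgeProb (hp : p ∈ Set.Icc (0 : ℝ) 1) (hq : q ∈ Set.Icc (0 : ℝ) 1)
    (θ η : Fin n → Bool) (e : Edge n) :
    rho (edgeProb p q θ e) (edgeProb p q η e)
      = if (e.1.1 ∈ univ.filter fun i => θ i ≠ η i) ↔ (e.1.2 ∉ univ.filter fun i => θ i ≠ η i)
        then rho p q else 1 := by
  simp only [edgeProb, mem_filter, mem_univ, true_and]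
  cases θ e.1.1 <;> cases θ e.1.2 <;> cases η e.1.1 <;> cases η e.1.2 <;>
    simp [rho_self hp.1 hp.2, rho_self hq.1 hq.2, rho_comm q p]

lemma sum_sqrt_graphPMF_mul_eq_rho_pow (hp : p ∈ Set.Icc (0 : ℝ) 1)
    (hq : q ∈ Set.Icc (0 : ℝ) 1) (θ η : Fin n → Bool) :
    ∑ x : ObsGraph n, √(graphPMF p q θ x * graphPMF p q η x)
      = rho p q ^ (hdist θ η * (n - hdist θ η)) := by
  rw [sum_sqrt_graphPMF_mul hp hq, Fintype.prod_congr _ _ (rho_edgeProb hp hq θ η), prod_ite,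
    prod_const_one, mul_one, prod_const, card_filter_edge_mem_iff_notMem, card_compl,
    Fintype.card_fin, hdist]

end GraphModel

lemma mul_div_le_sqrt_mul {a b c D : ℝ} (ha : 0 ≤ a) (hb : 0 ≤ b) (hc : 0 ≤ c) (hD : 0 < D)
    (haD : c * a ≤ D) (hbD : c * b ≤ D) : a * (c * b / D) ≤ √(a * b) := by
  have hx : 0 ≤ a * (c * b / D) := by positivity
  have hxa : a * (c * b / D) ≤ a :=
    mul_le_of_le_one_right ha ((div_le_one hD).2 hbD)
  have hxb : a * (c * b / D) ≤ b := by
    rw [show a * (c * b / D) = b * (c * a / D) by ring]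
    exact mul_le_of_le_one_right hb ((div_le_one hD).2 haD)
  rw [Real.le_sqrt hx (mul_nonneg ha hb), sq]
  exact mul_le_mul hxa hxb hx ha

section Posterior

variable {n : ℕ} {p q : ℝ} {pri : (Fin n → Bool) → ℝ} {A : Finset (Fin n → Bool)}

lemma postMass_sdiff (hA : A ⊆ Theta n) {x : ObsGraph n}
    (hx : 0 < ∑ η ∈ Theta n, pri η * graphPMF p q η x) :
    postMass p q pri (Theta n \ A) x = 1 - postMass p q pri A x := by
  rw [postMass, postMass, eq_sub_iff_add_eq, ← add_div, sum_sdiff hA, div_self hx.ne']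

lemma expPostMass_sdiff (hA : A ⊆ Theta n)
    (hx : ∀ x, 0 < ∑ η ∈ Theta n, pri η * graphPMF p q η x) (θ : Fin n → Bool) :
    expPostMass p q pri θ (Theta n \ A) = 1 - expPostMass p q pri θ A := by
  simp only [expPostMass, postMass_sdiff hA (hx _), mul_sub, mul_one, sum_sub_distrib,
    sum_graphPMF]

lemma expPostMass_nonneg (hp : p ∈ Set.Ioo (0 : ℝ) 1) (hq : q ∈ Set.Ioo (0 : ℝ) 1)
    (hpri : ∀ η, 0 ≤ pri η) (θ : Fin n → Bool) :
    0 ≤ expPostMass p q pri θ A :=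
  sum_nonneg fun x _ => mul_nonneg (graphPMF_pos hp hq θ x).le <| div_nonneg
    (sum_nonneg fun η _ => mul_nonneg (hpri η) (graphPMF_pos hp hq η x).le)
    (sum_nonneg fun η _ => mul_nonneg (hpri η) (graphPMF_pos hp hq η x).le)

lemma expPostMass_le_one (hp : p ∈ Set.Ioo (0 : ℝ) 1) (hq : q ∈ Set.Ioo (0 : ℝ) 1)
    (hpri : ∀ η, 0 ≤ pri η) (hA : A ⊆ Theta n)
    (hx : ∀ x, 0 < ∑ η ∈ Theta n, pri η * graphPMF p q η x) (θ : Fin n → Bool) :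
    expPostMass p q pri θ A ≤ 1 := by
  have := expPostMass_nonneg hp hq hpri θ (A := Theta n \ A)
  rw [expPostMass_sdiff hA hx] at this
  linarith

lemma sum_const_mul_graphPMF_pos (hp : p ∈ Set.Ioo (0 : ℝ) 1) (hq : q ∈ Set.Ioo (0 : ℝ) 1)
    {θ : Fin n → Bool} (hθ : θ ∈ Theta n) {u : ℝ} (hu : 0 < u) (x : ObsGraph n) :
    0 < ∑ η ∈ Theta n, u * graphPMF p q η x :=
  sum_pos (fun η _ => mul_pos hu (graphPMF_pos hp hq η x)) ⟨θ, hθ⟩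

lemma expPostMass_const_le_sum_sqrt (hp : p ∈ Set.Ioo (0 : ℝ) 1)
    (hq : q ∈ Set.Ioo (0 : ℝ) 1) {θ : Fin n → Bool} (hθ : θ ∈ Theta n) {u : ℝ} (hu : 0 < u)
    (hA : A ⊆ Theta n) :
    expPostMass p q (fun _ => u) θ A
      ≤ ∑ η ∈ A, ∑ x : ObsGraph n, √(graphPMF p q θ x * graphPMF p q η x) := by
  have hle : ∀ x, ∀ η ∈ Theta n, u * graphPMF p q η x ≤ ∑ η ∈ Theta n, u * graphPMF p q η x :=
    fun x η hη => single_le_sum (f := fun η => u * graphPMF p q η x)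
      (fun η _ => (mul_pos hu (graphPMF_pos hp hq η x)).le) hη
  calc expPostMass p q (fun _ => u) θ A
      = ∑ η ∈ A, ∑ x : ObsGraph n, graphPMF p q θ x *
          (u * graphPMF p q η x / ∑ η ∈ Theta n, u * graphPMF p q η x) := by
        simp only [expPostMass, postMass, sum_div, mul_sum]
        exact sum_comm
    _ ≤ _ := sum_le_sum fun η hη => sum_le_sum fun x _ =>
        mul_div_le_sqrt_mul (graphPMF_pos hp hq θ x).le (graphPMF_pos hp hq η x).le hu.le
          (sum_const_mul_graphPMF_pos hp hq hθ hu x) (hle x θ hθ) (hle x η (hA hη))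

lemma one_sub_sum_rho_pow_le_expPostMass_const (hp : p ∈ Set.Ioo (0 : ℝ) 1)
    (hq : q ∈ Set.Ioo (0 : ℝ) 1) {θ : Fin n → Bool} (hθ : θ ∈ Theta n) {u : ℝ} (hu : 0 < u)
    (hA : A ⊆ Theta n) :
    1 - ∑ η ∈ Theta n \ A, rho p q ^ (hdist θ η * (n - hdist θ η))
      ≤ expPostMass p q (fun _ => u) θ A := by
  have herr := expPostMass_const_le_sum_sqrt hp hq hθ hu (sdiff_subset (s := Theta n) (t := A))
  rw [expPostMass_sdiff hA (sum_const_mul_graphPMF_pos hp hq hθ hu)] at herr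
  simp only [sum_sqrt_graphPMF_mul_eq_rho_pow (Set.Ioo_subset_Icc_self hp)
    (Set.Ioo_subset_Icc_self hq)] at herr
  linarith

end Posterior

lemma choose_le_exp_one_mul_div_pow (n m : ℕ) : (n.choose m : ℝ) ≤ (exp 1 * n / m) ^ m := by
  rcases Nat.eq_zero_or_pos m with rfl | hm
  · simp
  have hm' : (0 : ℝ) < m := Nat.cast_pos.2 hm
  have hfact : (m : ℝ) ^ m ≤ exp 1 ^ m * m.factorial := by
    have := Real.pow_div_factorial_le_exp (m : ℝ) hm'.le m
    rwa [← exp_one_pow, div_le_iff₀ (by positivity)] at this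
  calc (n.choose m : ℝ) ≤ n ^ m / m.factorial := Nat.choose_le_pow_div m n
    _ ≤ (exp 1 * n / m) ^ m := by
      rw [div_pow, mul_pow, div_le_div_iff₀ (by positivity) (by positivity)]
      calc (n : ℝ) ^ m * m ^ m ≤ n ^ m * (exp 1 ^ m * m.factorial) := by gcongr
        _ = _ := by ring

lemma pow_mul_sub_le_exp {ρ s : ℝ} {m n : ℕ} (hρ0 : 0 ≤ ρ) (hs : 0 ≤ s)
    (hρ : ρ ≤ exp (-(2 * s / n))) (h2m : 2 * m ≤ n) : ρ ^ (m * (n - m)) ≤ exp (-(m * s)) := by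
  rcases Nat.eq_zero_or_pos n with rfl | hn
  · obtain rfl : m = 0 := by omega
    simp
  have hn' : (0 : ℝ) < n := Nat.cast_pos.2 hn
  have hnm : (n : ℝ) ≤ 2 * (n - m : ℕ) := by
    rw [Nat.cast_sub (by omega)]
    have : (2 * m : ℝ) ≤ n := by exact_mod_cast h2m
    linarith
  calc ρ ^ (m * (n - m)) ≤ exp (-(2 * s / n)) ^ (m * (n - m)) := by gcongr
    _ = exp (-(m * s * (2 * (n - m : ℕ) / n))) := by
      rw [← exp_nat_mul]
      push_cast
      ring_nf
    _ ≤ exp (-(m * s)) := by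
      refine exp_le_exp.2 (neg_le_neg ?_)
      exact le_mul_of_one_le_right (by positivity) ((one_le_div hn').2 hnm)

lemma choose_mul_exp_le {a s : ℝ} {n k m : ℕ} (ha : 0 < a) (hk : a * n ≤ k) (hkm : k < m)
    (hG : 0 ≤ log a + s - 1) :
    (n.choose m : ℝ) * exp (-(m * s)) ≤ exp (-(a * n * (log a + s - 1))) * exp (-(m - k)) := by
  rcases lt_or_ge n m with hnm | hmn
  · rw [Nat.choose_eq_zero_of_lt hnm, Nat.cast_zero, zero_mul]
    positivity
  have hm : (0 : ℝ) < m := by exact_mod_cast (k.zero_le.trans_lt hkm)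
  have hn : (0 : ℝ) < n := hm.trans_le (by exact_mod_cast hmn)
  have hkm' : (k : ℝ) < m := by exact_mod_cast hkm
  have hchoose : (n.choose m : ℝ) ≤ exp (m * (1 + log n - log m)) := by
    refine (choose_le_exp_one_mul_div_pow n m).trans_eq ?_
    rw [← exp_log (by positivity : 0 < exp 1 * n / m), ← exp_nat_mul, log_div (by positivity)
      hm.ne', log_mul (exp_pos 1).ne' hn.ne', log_exp]
  -- the tangent line of `x ↦ x log x` at `x = a n`
  have htangent : m - a * n ≤ m * (log m - log a - log n) := by
    have := one_sub_inv_le_log_of_pos (by positivity : 0 < m / (a * n))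
    rw [log_div hm.ne' (by positivity), log_mul ha.ne' hn.ne', inv_div] at this
    have := mul_le_mul_of_nonneg_left this hm.le
    rwa [mul_sub, mul_one, mul_div_cancel₀ _ hm.ne', ← sub_sub] at this
  calc (n.choose m : ℝ) * exp (-(m * s)) ≤ exp (m * (1 + log n - log m)) * exp (-(m * s)) := by
        gcongr
    _ ≤ exp (-(a * n * (log a + s - 1))) * exp (-(m - k)) := by
        rw [← exp_add, ← exp_add]
        refine exp_le_exp.2 ?_
        nlinarith [mul_nonneg (by linarith : (0 : ℝ) ≤ m - a * n) hG]

lemma sum_Ioc_exp_neg_sub_le_one (k n : ℕ) : ∑ m ∈ Ioc k n, exp (-((m : ℝ) - k)) ≤ 1 := by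
  have hr : exp (-1) ≤ 1 / 2 := by
    rw [exp_neg, inv_le_comm₀ (exp_pos 1) (by norm_num)]
    linarith [add_one_le_exp (1 : ℝ)]
  set r := exp (-1)
  have hterm : ∀ m : ℕ, exp (-((m : ℝ) - k)) = exp k * r ^ m := by
    intro m
    rw [← exp_nat_mul, ← exp_add]
    ring_nf
  calc ∑ m ∈ Ioc k n, exp (-((m : ℝ) - k)) = exp k * ∑ m ∈ Ico (k + 1) (n + 1), r ^ m := by
        rw [Finset.Ico_add_one_add_one_eq_Ioc, mul_sum]
        exact sum_congr rfl fun m _ => hterm m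
    _ ≤ exp k * (r ^ (k + 1) / (1 - r)) := by
        gcongr
        exact geom_sum_Ico_le_of_lt_one (exp_pos _).le (by linarith)
    _ = r / (1 - r) := by
        rw [pow_succ, ← mul_div_assoc, ← mul_assoc, ← hterm k, sub_self, neg_zero, exp_zero,
          one_mul]
    _ ≤ 1 := by rw [div_le_one (by linarith)]; linarith

lemma rho_div_le_exp {c d : ℝ} {n : ℕ} (hp : c / n ∈ Set.Icc (0 : ℝ) 1)
    (hq : d / n ∈ Set.Icc (0 : ℝ) 1) :
    rho (c / n) (d / n) ≤ exp (-(2 * ((1 / 4) * (√c - √d) ^ 2) / n)) := by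
  refine (rho_le_exp_neg hp.1 hp.2 hq.1 hq.2).trans_eq ?_
  rw [sqrt_div' c n.cast_nonneg, sqrt_div' d n.cast_nonneg, ← sub_div, div_pow,
    sq_sqrt n.cast_nonneg]
  ring_nf

lemma one_sub_two_mul_exp_le_expPostMass_hball {n k : ℕ} {p q a s : ℝ}
    (hp : p ∈ Set.Ioo (0 : ℝ) 1) (hq : q ∈ Set.Ioo (0 : ℝ) 1) {θ : Fin n → Bool}
    (hθ : θ ∈ Theta n) (ha : 0 < a) (hk : a * n ≤ k) (hs : 0 ≤ s)
    (hρ : rho p q ≤ exp (-(2 * s / n))) (hG : 0 ≤ log a + s - 1) :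
    1 - 2 * exp (-(a * n * (log a + s - 1))) ≤ expPostMass p q (unifPrior n) θ (hball θ k) := by
  set T := a * n * (log a + s - 1)
  set E := Theta n \ hball θ k
  have hρ0 : 0 ≤ rho p q := by unfold rho; positivity
  have hE : ∀ η ∈ E, kdist η θ ∈ Ioc k n := fun η hη => by
    obtain ⟨hηΘ, hηk⟩ := mem_sdiff.1 hη
    exact mem_Ioc.2 ⟨not_le.1 fun h => hηk (mem_filter.2 ⟨hηΘ, h⟩), kdist_le η θ⟩
  have hfiber : ∀ m, #(E.filter fun η => kdist η θ = m) ≤ 2 * n.choose m := fun m =>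
    (card_le_card (filter_subset_filter _ (subset_univ E))).trans
      (card_kdist_eq_le_two_mul_choose θ m)
  suffices herr : ∑ η ∈ E, rho p q ^ (hdist θ η * (n - hdist θ η)) ≤ 2 * exp (-T) from
    (sub_le_sub_left herr 1).trans <| one_sub_sum_rho_pow_le_expPostMass_const hp hq hθ
      (u := ((2 : ℝ) ^ (n - 1))⁻¹) (by positivity) (filter_subset _ _)
  calc ∑ η ∈ E, rho p q ^ (hdist θ η * (n - hdist θ η))
      ≤ ∑ η ∈ E, exp (-(kdist η θ * s)) := sum_le_sum fun η _ => by
        rw [hdist_comm, ← kdist_mul_sub_kdist]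
        exact pow_mul_sub_le_exp hρ0 hs hρ (two_mul_kdist_le η θ)
    _ = ∑ m ∈ Ioc k n, ∑ η ∈ E.filter fun η => kdist η θ = m, exp (-(m * s)) := by
        rw [← sum_fiberwise_of_maps_to hE]
        exact sum_congr rfl fun m _ => sum_congr rfl fun η hη => by rw [(mem_filter.1 hη).2]
    _ ≤ ∑ m ∈ Ioc k n, 2 * (n.choose m * exp (-(m * s))) := sum_le_sum fun m _ => by
        rw [sum_const, nsmul_eq_mul, ← mul_assoc]
        gcongr
        exact_mod_cast hfiber m
    _ ≤ ∑ m ∈ Ioc k n, 2 * (exp (-T) * exp (-((m : ℝ) - k))) := sum_le_sum fun m hm =>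
        mul_le_mul_of_nonneg_left (choose_mul_exp_le ha hk (mem_Ioc.1 hm).1 hG) zero_le_two
    _ ≤ 2 * exp (-T) := by
        rw [← mul_sum, ← mul_sum]
        exact mul_le_mul_of_nonneg_left
          (mul_le_of_le_one_right (exp_pos _).le (sum_Ioc_exp_neg_sub_le_one k n)) zero_le_two

theorem stmt11_general (c d : ℕ → ℝ)
    (hp : ∀ n, 2 ≤ n → c n / n ∈ Set.Ioo (0:ℝ) 1)
    (hq : ∀ n, 2 ≤ n → d n / n ∈ Set.Ioo (0:ℝ) 1)
    (θ : (n : ℕ) → Fin n → Bool) (hθ : ∀ n, 2 ≤ n → θ n ∈ Theta n)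
    (a : ℕ → ℝ) (ha : ∀ n, a n ∈ Set.Ioo (0:ℝ) (1/2))
    (k : ℕ → ℕ) (hk : ∀ n, a n * n ≤ (k n : ℝ))
    (hcond : Filter.Tendsto
      (fun n : ℕ => a n * n * (Real.log (a n)
        + (1/4) * (Real.sqrt (c n) - Real.sqrt (d n))^2 - 1))
      Filter.atTop Filter.atTop) :
    Filter.Tendsto (fun n : ℕ =>
        expPostMass (c n / n) (d n / n) (unifPrior n) (θ n) (hball (θ n) (k n)))
      Filter.atTop (nhds 1) := by
  have hlower : Tendsto (fun n : ℕ => 1 - 2 * exp (-(a n * n * (log (a n)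
      + (1/4) * (√(c n) - √(d n))^2 - 1)))) atTop (nhds 1) := by
    simpa using tendsto_const_nhds.sub
      ((tendsto_exp_atBot.comp (tendsto_neg_atTop_atBot.comp hcond)).const_mul 2)
  refine tendsto_of_tendsto_of_tendsto_of_le_of_le' hlower tendsto_const_nhds ?_ ?_
  · filter_upwards [eventually_ge_atTop 2, hcond.eventually_ge_atTop 0] with n hn hT
    have han : 0 < a n * n := mul_pos (ha n).1 (by positivity)
    exact one_sub_two_mul_exp_le_expPostMass_hball (hp n hn) (hq n hn) (hθ n hn) (ha n).1
      (hk n) (by positivity)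
      (rho_div_le_exp (Set.Ioo_subset_Icc_self (hp n hn)) (Set.Ioo_subset_Icc_self (hq n hn)))
      (nonneg_of_mul_nonneg_right hT han)
  · filter_upwards [eventually_ge_atTop 2] with n hn
    have hu : (0 : ℝ) < ((2 : ℝ) ^ (n - 1))⁻¹ := by positivity
    exact expPostMass_le_one (hp n hn) (hq n hn) (fun _ => hu.le) (filter_subset _ _)
      (sum_const_mul_graphPMF_pos (hp n hn) (hq n hn) (hθ n hn) hu) (θ n)

/-- in the Kesten–Stigum phase, if
`a_n n (log a_n + (1/4)(√c_n − √d_n)² − 1) → ∞` then the posterior recovers the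
community assignment almost-exactly with error rate `k_n ≥ a_n n`. -/
theorem stmt11 (c d : ℕ → ℝ) (hc0 : ∀ n, 2 ≤ n → 0 < c n) (hd0 : ∀ n, 2 ≤ n → 0 < d n)
    (hcB : ∃ C : ℝ, ∀ n, c n ≤ C) (hdB : ∃ C : ℝ, ∀ n, d n ≤ C)
    (hp : ∀ n, 2 ≤ n → c n / n ∈ Set.Ioo (0:ℝ) 1)
    (hq : ∀ n, 2 ≤ n → d n / n ∈ Set.Ioo (0:ℝ) 1)
    (θ : (n : ℕ) → Fin n → Bool) (hθ : ∀ n, 2 ≤ n → θ n ∈ Theta n)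
    (a : ℕ → ℝ) (ha : ∀ n, a n ∈ Set.Ioo (0:ℝ) (1/2))
    (k : ℕ → ℕ) (hk : ∀ n, a n * n ≤ (k n : ℝ))
    (hcond : Filter.Tendsto
      (fun n : ℕ => a n * n * (Real.log (a n)
        + (1/4) * (Real.sqrt (c n) - Real.sqrt (d n))^2 - 1))
      Filter.atTop Filter.atTop) :
    Filter.Tendsto (fun n : ℕ =>
        expPostMass (c n / n) (d n / n) (unifPrior n) (θ n) (hball (θ n) (k n)))
      Filter.atTop (nhds 1) :=
  stmt11_general c d hp hq θ hθ a ha k hk hcond
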